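/- Let s ≥ 1 be an integer, q = 2^s, m ≥ 3 an odd integer, and n = q^m − 1. Then for each i ∈ {0,1}, the code C̃_{(q,m;i)} is self-orthogonal (C̃_{(q,m;i)} ⊆ C̃_{(q,m;i)}^⊥) and has dimension (n−1)/2 as an F-vector space. -/

import Mathlib

open Finset

/-- The `q`-weight of a nonnegative integer: the sum of its base-`q` digits. -/
def qWeight (q i : ℕ) : ℕ := (Nat.digits q i).sum

/-- The set `T_{(q,m;j)} = {i : 1 ≤ i ≤ q^m − 2, wt_q(i) ≡ j (mod 2)}`. -/
def Tset (q m j : ℕ) : Set ℕ :=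
  {i | 1 ≤ i ∧ i ≤ q ^ m - 2 ∧ qWeight q i % 2 = j}

/-- The cyclic code of length `n` over `F` with defining set `T` with respect to `β ∈ E`:
all words `(c_0, …, c_{n-1})` with `∑_j c_j β^{k j} = 0` for every `k ∈ T`. -/
def cyclicCode (F E : Type*) [Field F] [Field E] [Algebra F E]
    (n : ℕ) (β : E) (T : Set ℕ) : Submodule F (Fin n → F) where
  carrier := {c | ∀ k ∈ T, ∑ j : Fin n, algebraMap F E (c j) * β ^ (k * (j : ℕ)) = 0}
  add_mem' := by
    intro a b ha hb k hk
    simp only [Set.mem_setOf_eq, Pi.add_apply, map_add, add_mul] at *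
    rw [Finset.sum_add_distrib, ha k hk, hb k hk, add_zero]
  zero_mem' := by
    intro k hk
    simp
  smul_mem' := by
    intro r c hc k hk
    simp only [Set.mem_setOf_eq, Pi.smul_apply, smul_eq_mul, map_mul, mul_assoc] at *
    rw [← Finset.mul_sum, hc k hk, mul_zero]

/-- The minimum distance of a code: the least Hamming weight of a nonzero codeword. -/
noncomputable def minDist {F : Type*} [Field F] [DecidableEq F] {n : ℕ}
    (C : Submodule F (Fin n → F)) : ℕ :=
  sInf {w | ∃ c ∈ C, c ≠ 0 ∧ hammingNorm c = w}

/-- The dual of a set of words: all words orthogonal (for the standard bilinear form)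
to every word of the set. -/
def dualSet {F : Type*} [Field F] {N : ℕ} (C : Set (Fin N → F)) : Set (Fin N → F) :=
  {u | ∀ v ∈ C, ∑ k : Fin N, u k * v k = 0}

/-!
Since `q` is even and `m` is odd, the `q`-weights of `k` and `q^m - 1 - k` add up to the odd
number `m (q - 1)`, so for `1 ≤ k < n` exactly one of `k`, `n - k` lies in `T_j`. Hence `T_j`
has `(n - 1)/2` elements, and for every `k < n` one of `k`, `n - k` lies in the defining set
`S = T_j ∪ {0}`. Multiplication by `q` cyclically rotates base-`q` digits modulo `n`, so `S` is
a union of `q`-cyclotomic cosets and `∏_{k ∈ S} (X - β^k)` has coefficients in `F`; the code is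
the set of its multiples of degree `< n`, of dimension `n - |S| = (n - 1)/2`. Self-orthogonality
follows from the discrete Parseval identity `∑_k c(β^k) v(β^(n-k)) = n ∑_t c_t v_t`: every
term on the left vanishes, and `n ≠ 0` in `E` because `E` contains a primitive `n`-th root of
unity.
-/

open Polynomial Module

namespace FiniteField

variable {K L : Type*} [Field K] [Fintype K] [Field L] [Algebra K L]

theorem mem_range_algebraMap_of_pow_card_eq {x : L} (hx : x ^ Fintype.card K = x) :
    x ∈ (algebraMap K L).range := by
  have hsplits : (X ^ Fintype.card K - X : K[X]).Splits := by
    rw [splits_iff_card_roots, roots_X_pow_card_sub_X, ← Finset.card_def, Finset.card_univ,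
      X_pow_card_sub_X_natDegree_eq K Fintype.one_lt_card]
  exact hsplits.mem_range_of_isRoot (X_pow_card_sub_X_ne_zero K Fintype.one_lt_card)
    (by simp [hx])

theorem prod_X_sub_C_mem_lifts [DecidableEq L] {R : Finset L}
    (hR : ∀ x ∈ R, x ^ Fintype.card K ∈ R) :
    (∏ x ∈ R, (X - C x)) ∈ lifts (algebraMap K L) := by
  set φ := frobeniusAlgHom K L
  have hφ : Function.Injective φ := (φ : L →+* L).injective
  have himage : R.image φ = R :=
    Finset.eq_of_subset_of_card_le (Finset.image_subset_iff.mpr hR)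
      (Finset.card_image_of_injective _ hφ).ge
  have hfixed : (∏ x ∈ R, (X - C x)).map (φ : L →+* L) = ∏ x ∈ R, (X - C x) := by
    conv_rhs => rw [← himage]
    rw [Finset.prod_image fun x _ y _ h => hφ h, Polynomial.map_prod]
    simp
  rw [lifts_iff_coeff_lifts]
  intro i
  apply mem_range_algebraMap_of_pow_card_eq
  simpa [φ] using congrArg (coeff · i) hfixed

end FiniteField

namespace Polynomial

theorem aeval_ofFn {K L : Type*} [CommSemiring K] [DecidableEq K] [CommSemiring L] [Algebra K L]
    {n : ℕ} (v : Fin n → K) (x : L) :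
    aeval x (ofFn n v) = ∑ j, algebraMap K L (v j) * x ^ (j : ℕ) := by
  simp only [ofFn_eq_sum_monomial, map_sum, aeval_monomial]

theorem prod_X_sub_C_dvd_iff_isRoot {R : Type*} [CommRing R] [IsDomain R] (s : Finset R)
    (p : R[X]) : ∏ x ∈ s, (X - C x) ∣ p ↔ ∀ x ∈ s, p.IsRoot x := by
  rcases eq_or_ne p 0 with rfl | hp
  · simp
  rw [Finset.prod_eq_multiset_prod, Multiset.prod_X_sub_C_dvd_iff_le_roots hp,
    Multiset.le_iff_subset s.nodup]
  simp [Multiset.subset_iff, hp]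

theorem finrank_ker_modByMonicHom_comp_ofFn {K : Type*} [Field K] [DecidableEq K] {g : K[X]}
    (hg : g.Monic) {n : ℕ} (hgn : g.natDegree ≤ n) :
    finrank K (LinearMap.ker (modByMonicHom g ∘ₗ ofFn n)) = n - g.natDegree := by
  have hrange : LinearMap.range (modByMonicHom g ∘ₗ ofFn n) = degreeLT K g.natDegree := by
    apply le_antisymm
    · rintro _ ⟨v, rfl⟩
      rw [mem_degreeLT, ← degree_eq_natDegree hg.ne_zero]
      exact degree_modByMonic_lt _ hg
    · intro p hp
      rw [mem_degreeLT, ← degree_eq_natDegree hg.ne_zero] at hp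
      refine ⟨toFn n p, ?_⟩
      rcases eq_or_ne p 0 with rfl | hp0
      · simp
      have hpn : p.natDegree < n :=
        (natDegree_lt_natDegree hp0 hp).trans_le hgn
      simp only [LinearMap.comp_apply, ofFn_comp_toFn_eq_id_of_natDegree_lt hpn,
        modByMonicHom_apply, (modByMonic_eq_self_iff hg).mpr hp]
  have := LinearMap.finrank_range_add_finrank_ker (modByMonicHom g ∘ₗ ofFn n)
  rw [hrange, finrank_fin_fun, (degreeLTEquiv K g.natDegree).finrank_eq, finrank_fin_fun] at this
  omega

end Polynomial

namespace IsPrimitiveRoot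

variable {E : Type*} [Field E] {n : ℕ} {β : E}

theorem sum_pow_mul_pow_sub (hβ : IsPrimitiveRoot β n) {i j : ℕ} (hi : i < n) (hj : j < n) :
    ∑ k ∈ Finset.range n, β ^ (k * i) * β ^ ((n - k) * j) = if i = j then (n : E) else 0 := by
  have hβ0 : β ≠ 0 := hβ.ne_zero (by omega)
  have hpow : ∀ l, (β ^ l) ^ n = 1 := fun l => by
    rw [← pow_mul, mul_comm, pow_mul, hβ.pow_eq_one, one_pow]
  have hterm : ∀ k ∈ Finset.range n,
      β ^ (k * i) * β ^ ((n - k) * j) = (β ^ i / β ^ j) ^ k := by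
    intro k hk
    rw [mul_comm k, mul_comm (n - k), pow_mul, pow_mul, pow_sub₀ _ (pow_ne_zero _ hβ0)
      (Finset.mem_range.mp hk).le, hpow, one_mul, div_pow, div_eq_mul_inv]
  rw [Finset.sum_congr rfl hterm]
  split_ifs with h
  · simp [h, pow_ne_zero _ hβ0]
  · have hx : β ^ i / β ^ j ≠ 1 := by
      rw [Ne, div_eq_one_iff_eq (pow_ne_zero _ hβ0)]
      exact fun h' => h (hβ.pow_inj hi hj h')
    rw [geom_sum_eq hx, div_pow, hpow, hpow, div_one, sub_self, zero_div]

theorem sum_mul_sum_pow_sub (hβ : IsPrimitiveRoot β n) (a b : Fin n → E) :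
    ∑ k ∈ Finset.range n,
        (∑ i, a i * β ^ (k * (i : ℕ))) * (∑ j, b j * β ^ ((n - k) * (j : ℕ))) =
      n * ∑ i, a i * b i := by
  calc _ = ∑ i, ∑ j, a i * b j *
        ∑ k ∈ Finset.range n, β ^ (k * (i : ℕ)) * β ^ ((n - k) * (j : ℕ)) := by
        simp_rw [Finset.sum_mul_sum, Finset.mul_sum]
        rw [Finset.sum_comm]
        refine Finset.sum_congr rfl fun i _ => ?_
        rw [Finset.sum_comm]
        exact Finset.sum_congr rfl fun j _ => Finset.sum_congr rfl fun k _ => by ring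
    _ = n * ∑ i, a i * b i := by
        simp_rw [hβ.sum_pow_mul_pow_sub (Fin.isLt _) (Fin.isLt _), Fin.val_inj, mul_ite, mul_zero,
          Finset.sum_ite_eq, Finset.mem_univ, if_true, Finset.mul_sum]
        exact Finset.sum_congr rfl fun i _ => mul_comm _ _

end IsPrimitiveRoot

section CyclicCode

variable {F E : Type*} [Field F] [Field E] [Algebra F E] {n : ℕ} {β : E}

theorem mem_cyclicCode_iff_aeval [DecidableEq F] {T : Set ℕ} {c : Fin n → F} :
    c ∈ cyclicCode F E n β T ↔ ∀ k ∈ T, aeval (β ^ k) (ofFn n c) = 0 := by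
  simp only [aeval_ofFn, ← pow_mul]
  rfl

theorem finrank_cyclicCode [Fintype F] (hβ : IsPrimitiveRoot β n) {S : Finset ℕ}
    (hSn : ∀ k ∈ S, k < n) (hSq : ∀ k ∈ S, Fintype.card F * k % n ∈ S) :
    finrank F (cyclicCode F E n β S) = n - S.card := by
  classical
  set R := S.image (β ^ ·)
  have hcard : R.card = S.card :=
    Finset.card_image_of_injOn fun a ha b hb h => hβ.pow_inj (hSn a ha) (hSn b hb) h
  have hR : ∀ x ∈ R, x ^ Fintype.card F ∈ R := by
    simp only [R, Finset.mem_image, forall_exists_index, and_imp, forall_apply_eq_imp_iff₂]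
    intro k hk
    refine ⟨_, hSq k hk, ?_⟩
    rw [← pow_mul, mul_comm, hβ.eq_orderOf, pow_mod_orderOf]
  obtain ⟨g, hgmap, hgdeg, hgmonic⟩ := lifts_and_natDegree_eq_and_monic
    (FiniteField.prod_X_sub_C_mem_lifts hR) (monic_prod_of_monic _ _ fun x _ => monic_X_sub_C x)
  have hcode : cyclicCode F E n β S = LinearMap.ker (modByMonicHom g ∘ₗ ofFn n) := by
    ext c
    rw [mem_cyclicCode_iff_aeval, LinearMap.mem_ker, LinearMap.comp_apply, ← LinearMap.mem_ker,
      mem_ker_modByMonic hgmonic, ← map_dvd_map' (algebraMap F E), hgmap,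
      prod_X_sub_C_dvd_iff_isRoot]
    simp [R, aeval_def, eval_map]
  have hgS : g.natDegree = S.card := by
    rw [hgdeg, natDegree_finsetProd_X_sub_C_eq_card, hcard]
  have hSle : S.card ≤ n :=
    (Finset.card_le_card fun k hk => Finset.mem_range.mpr (hSn k hk)).trans_eq
      (Finset.card_range n)
  rw [hcode, finrank_ker_modByMonicHom_comp_ofFn hgmonic (hgS ▸ hSle), hgS]

theorem cyclicCode_subset_dualSet (hβ : IsPrimitiveRoot β n) {T : Set ℕ}
    (hT : ∀ k < n, k ∈ T ∨ n - k ∈ T) :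
    (cyclicCode F E n β T : Set (Fin n → F)) ⊆ dualSet (cyclicCode F E n β T) := by
  intro c hc v hv
  rcases n.eq_zero_or_pos with rfl | hn
  · simp
  have := NeZero.of_pos hn
  apply (algebraMap F E).injective
  rw [map_zero, ← mul_right_inj' hβ.neZero'.out, mul_zero, map_sum]
  simp_rw [map_mul]
  rw [← hβ.sum_mul_sum_pow_sub]
  refine Finset.sum_eq_zero fun k hk => ?_
  rcases hT k (Finset.mem_range.mp hk) with h | h
  · rw [hc k h, zero_mul]
  · rw [hv _ h, mul_zero]

end CyclicCode

section qWeight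

variable {q : ℕ}

theorem qWeight_eq_mod_add_div (hq : 2 ≤ q) (x : ℕ) :
    qWeight q x = x % q + qWeight q (x / q) := by
  rcases Nat.eq_zero_or_pos x with rfl | hx
  · simp [qWeight]
  · simp [qWeight, Nat.digits_def' hq hx]

theorem qWeight_mul_add (hq : 2 ≤ q) (a : ℕ) {r : ℕ} (hr : r < q) :
    qWeight q (q * a + r) = r + qWeight q a := by
  rw [qWeight_eq_mod_add_div hq, Nat.mul_add_mod, Nat.mod_eq_of_lt hr,
    Nat.mul_add_div (by omega), Nat.div_eq_of_lt hr, add_zero]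

theorem qWeight_of_lt (hq : 2 ≤ q) {r : ℕ} (hr : r < q) : qWeight q r = r := by
  simpa [qWeight] using qWeight_mul_add hq 0 hr

theorem qWeight_pow_mul_add (hq : 2 ≤ q) (t a : ℕ) {b : ℕ} (hb : b < q ^ t) :
    qWeight q (q ^ t * a + b) = qWeight q a + qWeight q b := by
  induction t generalizing b with
  | zero => simp_all [qWeight]
  | succ t ih =>
    have hbq : b / q < q ^ t := by
      rw [Nat.div_lt_iff_lt_mul (by omega)]; rwa [← pow_succ]
    have hsplit : q ^ (t + 1) * a + b = q * (q ^ t * a + b / q) + b % q := by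
      conv_lhs => rw [pow_succ, ← Nat.div_add_mod b q]
      ring
    rw [hsplit, qWeight_mul_add hq _ (Nat.mod_lt _ (by omega)), ih hbq,
      qWeight_eq_mod_add_div hq b]
    ring

theorem qWeight_add_qWeight_sub (hq : 2 ≤ q) (m : ℕ) {i : ℕ} (hi : i < q ^ m) :
    qWeight q i + qWeight q (q ^ m - 1 - i) = m * (q - 1) := by
  induction m generalizing i with
  | zero => simp_all [qWeight]
  | succ m ih =>
    obtain ⟨a, r, hr, rfl⟩ : ∃ a r, r < q ∧ i = q * a + r :=
      ⟨i / q, i % q, Nat.mod_lt _ (by omega), (Nat.div_add_mod i q).symm⟩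
    rw [pow_succ'] at hi ⊢
    have ha : a + 1 ≤ q ^ m := by
      by_contra! h
      have : q * q ^ m ≤ q * a := Nat.mul_le_mul_left q (by omega)
      omega
    have hcompl : q * q ^ m - 1 - (q * a + r) = q * (q ^ m - 1 - a) + (q - 1 - r) := by
      zify [(by omega : q * a + r ≤ q * q ^ m - 1), (by omega : 1 ≤ q * q ^ m),
        (by omega : a ≤ q ^ m - 1), (by omega : 1 ≤ q ^ m), (by omega : r ≤ q - 1),
        (by omega : 1 ≤ q)]
      ring
    rw [hcompl, qWeight_mul_add hq _ hr, qWeight_mul_add hq _ (by omega)]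
    have := ih (by omega : a < q ^ m)
    rw [Nat.succ_mul]
    omega

theorem qWeight_mul_mod_pow_sub_one (hq : 2 ≤ q) (t : ℕ) {k : ℕ} (hk : k < q ^ (t + 1) - 1) :
    qWeight q (q * k % (q ^ (t + 1) - 1)) = qWeight q k := by
  obtain ⟨a, b, hb, rfl⟩ : ∃ a b, b < q ^ t ∧ k = q ^ t * a + b :=
    ⟨k / q ^ t, k % q ^ t, Nat.mod_lt _ (by positivity), (Nat.div_add_mod k _).symm⟩
  rw [pow_succ'] at hk ⊢
  have hP : 1 ≤ q ^ t := Nat.one_le_pow _ _ (by omega)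
  have ha : a < q := by
    by_contra! h
    have : q ^ t * q ≤ q ^ t * a := Nat.mul_le_mul_left _ h
    rw [mul_comm] at this
    omega
  -- the leading digit `a` of `k` becomes the last digit of `q k mod (q^(t+1) - 1)`
  have hrot : q * (q ^ t * a + b) = (q * b + a) + (q * q ^ t - 1) * a := by
    zify [(by nlinarith : 1 ≤ q * q ^ t)]
    ring
  have hlt : q * b + a < q * q ^ t - 1 := by
    rcases Nat.lt_or_ge (b + 1) (q ^ t) with h | h
    · have : q * (b + 2) ≤ q * q ^ t := Nat.mul_le_mul_left q h
      rw [Nat.mul_add] at this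
      omega
    · have hb1 : b + 1 = q ^ t := by omega
      have hb' : q * (b + 1) = q * q ^ t := by rw [hb1]
      have : q ^ t * (a + 1) < q ^ t * q := by rw [Nat.mul_add, mul_comm (q ^ t) q]; omega
      have := Nat.lt_of_mul_lt_mul_left this
      rw [Nat.mul_add] at hb'
      omega
  rw [hrot, Nat.add_mul_mod_self_left, Nat.mod_eq_of_lt hlt, qWeight_mul_add hq _ ha,
    qWeight_pow_mul_add hq _ _ hb, qWeight_of_lt hq ha]

theorem qWeight_sub_mod_two_ne {m : ℕ} (hq : 2 ≤ q) (hqe : Even q) (hm : Odd m) {i : ℕ}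
    (hi : i < q ^ m) : qWeight q (q ^ m - 1 - i) % 2 ≠ qWeight q i % 2 := by
  have hsum := qWeight_add_qWeight_sub hq m hi
  have hodd : Odd (m * (q - 1)) := hm.mul (Nat.Even.sub_odd (by omega) hqe odd_one)
  rw [← hsum, Nat.odd_iff] at hodd
  omega

end qWeight

def Tfinset (q m j : ℕ) : Finset ℕ :=
  (Finset.Icc 1 (q ^ m - 2)).filter (fun i => qWeight q i % 2 = j)

theorem coe_Tfinset (q m j : ℕ) : (Tfinset q m j : Set ℕ) = Tset q m j := by
  ext i
  simp [Tfinset, Tset, and_assoc]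

theorem mem_Tfinset_or_sub_mem {q m j : ℕ} (hq : 2 ≤ q) (hqe : Even q) (hm : Odd m) (hj : j < 2)
    {k : ℕ} (hk₁ : 1 ≤ k) (hk₂ : k ≤ q ^ m - 2) :
    k ∈ Tfinset q m j ∨ q ^ m - 1 - k ∈ Tfinset q m j := by
  have := qWeight_sub_mod_two_ne hq hqe hm (i := k) (by omega)
  simp only [Tfinset, Finset.mem_filter, Finset.mem_Icc]
  omega

theorem card_Tfinset {q m j : ℕ} (hq : 2 ≤ q) (hqe : Even q) (hm : Odd m) (hj : j < 2) :
    (Tfinset q m j).card = (q ^ m - 2) / 2 := by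
  have hflip : (Tfinset q m j).card =
      ((Finset.Icc 1 (q ^ m - 2)).filter (fun i => ¬ qWeight q i % 2 = j)).card := by
    refine Finset.card_nbij' (fun i => q ^ m - 1 - i) (fun i => q ^ m - 1 - i) ?_ ?_ ?_ ?_ <;>
    · intro i hi
      simp only [Tfinset, Finset.coe_filter, Finset.mem_Icc, Set.mem_ofPred_eq] at hi ⊢
      have := qWeight_sub_mod_two_ne hq hqe hm (i := i) (by omega)
      omega
  have := Finset.card_filter_add_card_filter_not (s := Finset.Icc 1 (q ^ m - 2))
    (fun i => qWeight q i % 2 = j)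
  rw [Nat.card_Icc] at this
  rw [Tfinset] at hflip ⊢
  omega

theorem mul_mod_mem_insert_zero_Tfinset {q m j : ℕ} (hq : 2 ≤ q) (hm : 1 ≤ m) {k : ℕ}
    (hk : k ∈ insert 0 (Tfinset q m j)) : q * k % (q ^ m - 1) ∈ insert 0 (Tfinset q m j) := by
  obtain ⟨t, rfl⟩ : ∃ t, m = t + 1 := ⟨m - 1, by omega⟩
  rcases eq_or_ne (q * k % (q ^ (t + 1) - 1)) 0 with h0 | h0
  · rw [h0]; exact Finset.mem_insert_self _ _
  simp only [Tfinset, Finset.mem_insert, Finset.mem_filter, Finset.mem_Icc] at hk ⊢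
  rcases hk with rfl | ⟨⟨hk₁, hk₂⟩, hkj⟩
  · simp at h0
  have hpos : 0 < q ^ (t + 1) - 1 := by
    have := Nat.one_lt_pow (by omega : t + 1 ≠ 0) (by omega : 1 < q)
    omega
  have := Nat.mod_lt (q * k) hpos
  rw [qWeight_mul_mod_pow_sub_one hq t (by omega)]
  omega

theorem stmt16_general (s q m n : ℕ) (hs : 1 ≤ s) (hq : q = 2 ^ s)
    (hmodd : Odd m) (hn : n = q ^ m - 1)
    (F E : Type*) [Field F] [Fintype F] [Field E] [Algebra F E]
    (hF : Fintype.card F = q)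
    (β : E) (hβ : orderOf β = n) :
    ∀ j : ℕ, j = 0 ∨ j = 1 →
      (cyclicCode F E n β (Tset q m j ∪ {0}) : Set (Fin n → F)) ⊆
          dualSet (cyclicCode F E n β (Tset q m j ∪ {0}) : Set (Fin n → F)) ∧
        Module.finrank F (cyclicCode F E n β (Tset q m j ∪ {0})) = (n - 1) / 2 := by
  intro j hj
  have hq2 : 2 ≤ q := hq ▸ Nat.le_self_pow (by omega) 2
  have hqe : Even q := hq ▸ Nat.even_pow.mpr ⟨even_two, by omega⟩
  have hm : 1 ≤ m := hmodd.pos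
  have hqm : Even (q ^ m) := Nat.even_pow.mpr ⟨hqe, by omega⟩
  have hqm2 : 2 ≤ q ^ m := hq2.trans (Nat.le_self_pow (by omega) q)
  have hβn : IsPrimitiveRoot β n := hβ ▸ IsPrimitiveRoot.orderOf β
  have hS : Tset q m j ∪ {0} = ↑(insert 0 (Tfinset q m j)) := by
    rw [Finset.coe_insert, coe_Tfinset, Set.union_singleton]
  have h0 : 0 ∉ Tfinset q m j := by simp [Tfinset]
  subst hn
  rw [hS]
  refine ⟨cyclicCode_subset_dualSet hβn fun k hk => ?_, ?_⟩
  · rcases Nat.eq_zero_or_pos k with rfl | hk0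
    · exact Or.inl (Finset.mem_insert_self _ _)
    · exact (mem_Tfinset_or_sub_mem hq2 hqe hmodd (by omega) hk0 (by omega)).imp
        Finset.mem_insert_of_mem Finset.mem_insert_of_mem
  rw [finrank_cyclicCode hβn ?_ fun k hk => by
      rw [hF]; exact mul_mod_mem_insert_zero_Tfinset hq2 hm hk,
    Finset.card_insert_of_notMem h0, card_Tfinset hq2 hqe hmodd (by omega)]
  · rw [Nat.even_iff] at hqm; omega
  · intro k hk
    simp only [Tfinset, Finset.mem_insert, Finset.mem_filter, Finset.mem_Icc] at hk
    omega

theorem stmt16 (s q m n : ℕ) (hs : 1 ≤ s) (hq : q = 2 ^ s)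
    (hm : 3 ≤ m) (hmodd : Odd m) (hn : n = q ^ m - 1)
    (F E : Type*) [Field F] [Fintype F] [DecidableEq F] [Field E] [Fintype E] [Algebra F E]
    (hF : Fintype.card F = q) (hE : Fintype.card E = q ^ m)
    (β : E) (hβ : orderOf β = n) :
    ∀ j : ℕ, j = 0 ∨ j = 1 →
      (cyclicCode F E n β (Tset q m j ∪ {0}) : Set (Fin n → F)) ⊆
          dualSet (cyclicCode F E n β (Tset q m j ∪ {0}) : Set (Fin n → F)) ∧
        Module.finrank F (cyclicCode F E n β (Tset q m j ∪ {0})) = (n - 1) / 2 :=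
  stmt16_general s q m n hs hq hmodd hn F E hF β hβ
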